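/- arXiv:math/0605684 — 5 statements merged into one kernel-verified Lean document; each statement's English description precedes it below -/
import Mathlib

section
/- Let q, ζ ∈ ℂ with 0 < |q| < 1, |ζ| = 1 and ζ ≠ 1. If h : ℂ → ℂ is complex differentiable at every point of ℂ ∖ {0} and satisfies ζ·h(z) = h(q·z) for all z ≠ 0, then h(z) = 0 for all z ≠ 0. -/
/-! Since `|ζ| = 1`, the modulus `‖h‖` is invariant under `z ↦ q z`. Every orbit of this map meets
the compact annulus `|q| ≤ |z| ≤ 1`, so `h` is bounded on `ℂ \ {0}`. Then `h ∘ exp` is a bounded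
entire function, hence constant by Liouville, and a constant `c` with `ζ c = c`, `ζ ≠ 1` is `0`. -/

open Set Metric Bornology Complex

theorem apply_zpow_mul_eq_of_apply_mul_eq {G α : Type*} [GroupWithZero G] {φ : G → α} {q : G}
    (hq : q ≠ 0) (hφ : ∀ z ≠ 0, φ (q * z) = φ z) (n : ℤ) {z : G} (hz : z ≠ 0) :
    φ (q ^ n * z) = φ z := by
  have hφ_inv : ∀ z ≠ 0, φ (q⁻¹ * z) = φ z := fun z hz => by
    simpa [hq] using (hφ (q⁻¹ * z) (mul_ne_zero (inv_ne_zero hq) hz)).symm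
  induction n using Int.induction_on with
  | zero => simp
  | succ n ih =>
    rw [add_comm, zpow_add₀ hq, zpow_one, mul_assoc, hφ _ (mul_ne_zero (zpow_ne_zero _ hq) hz), ih]
  | pred n ih =>
    rw [sub_eq_neg_add, zpow_add₀ hq, zpow_neg_one, mul_assoc,
      hφ_inv _ (mul_ne_zero (zpow_ne_zero _ hq) hz), ih]

theorem exists_zpow_mul_mem_annulus {𝕜 : Type*} [NormedField 𝕜] {q z : 𝕜} (hq : q ≠ 0)
    (hq1 : ‖q‖ < 1) (hz : z ≠ 0) : ∃ n : ℤ, q ^ n * z ∈ closedBall 0 1 \ ball 0 ‖q‖ := by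
  have hr : 0 < ‖q‖ := norm_pos_iff.mpr hq
  obtain ⟨n, hlt, hle⟩ := exists_mem_Ioc_zpow (norm_pos_iff.mpr hz) (one_lt_inv₀ hr |>.mpr hq1)
  refine ⟨n + 1, ?_, ?_⟩ <;> simp only [mem_closedBall_zero_iff, mem_ball_zero_iff, norm_mul,
    norm_zpow, not_lt]
  · calc ‖q‖ ^ (n + 1) * ‖z‖ ≤ ‖q‖ ^ (n + 1) * ‖q‖⁻¹ ^ (n + 1) := by gcongr
      _ = 1 := by rw [← mul_zpow, mul_inv_cancel₀ hr.ne', one_zpow]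
  · calc ‖q‖ = ‖q‖ ^ (n + 1) * ‖q‖⁻¹ ^ n := by
          rw [inv_zpow, zpow_add_one₀ hr.ne']; field_simp
      _ ≤ ‖q‖ ^ (n + 1) * ‖z‖ := by gcongr

theorem isBounded_image_compl_zero_of_norm_mul_eq {𝕜 E : Type*} [NormedField 𝕜] [ProperSpace 𝕜]
    [NormedAddCommGroup E] {f : 𝕜 → E} (hf : ContinuousOn f {0}ᶜ) {q : 𝕜} (hq : q ≠ 0)
    (hq1 : ‖q‖ < 1) (hfq : ∀ z ≠ 0, ‖f (q * z)‖ = ‖f z‖) : IsBounded (f '' {0}ᶜ) := by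
  have hK : IsCompact (closedBall (0 : 𝕜) 1 \ ball 0 ‖q‖) :=
    (isCompact_closedBall 0 1).diff isOpen_ball
  have hK0 : closedBall (0 : 𝕜) 1 \ ball 0 ‖q‖ ⊆ {0}ᶜ := fun w hw hw0 =>
    hw.2 (by rw [mem_singleton_iff.mp hw0]; exact mem_ball_self (norm_pos_iff.mpr hq))
  obtain ⟨C, hC⟩ := hK.exists_bound_of_continuousOn (hf.mono hK0)
  refine isBounded_iff_forall_norm_le.mpr ⟨C, ?_⟩
  rintro _ ⟨z, hz, rfl⟩
  obtain ⟨n, hn⟩ := exists_zpow_mul_mem_annulus hq hq1 hz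
  rw [← apply_zpow_mul_eq_of_apply_mul_eq (φ := (‖f ·‖)) hq hfq n hz]
  exact hC _ hn

theorem Complex.apply_eq_apply_of_differentiableOn_compl_zero_of_isBounded {E : Type*}
    [NormedAddCommGroup E] [NormedSpace ℂ E] {f : ℂ → E} (hf : DifferentiableOn ℂ f {0}ᶜ)
    (hb : IsBounded (f '' {0}ᶜ)) {z w : ℂ} (hz : z ≠ 0) (hw : w ≠ 0) : f z = f w := by
  have hexp : Differentiable ℂ (f ∘ exp) := fun t =>
    (hf.differentiableAt (isOpen_compl_singleton.mem_nhds (exp_ne_zero t))).comp t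
      differentiableAt_exp
  have hrange : range (f ∘ exp) ⊆ f '' {0}ᶜ := by
    rintro _ ⟨t, rfl⟩
    exact ⟨exp t, exp_ne_zero t, rfl⟩
  simpa [exp_log, hz, hw] using hexp.apply_eq_apply_of_bounded (hb.subset hrange) (log z) (log w)

/-- Let `q ζ : ℂ` with `0 < |q| < 1`, `|ζ| = 1` and `ζ ≠ 1`.
If `h : ℂ → ℂ` is complex differentiable at every point of `ℂ \ {0}` and satisfies
`ζ·h z = h (q·z)` for all `z ≠ 0`, then `h z = 0` for all `z ≠ 0`. -/
theorem coxeter_eigenvalue_functional_equation_no_solution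
    (q ζ : ℂ) (hq0 : 0 < ‖q‖) (hq1 : ‖q‖ < 1)
    (hζ : ‖ζ‖ = 1) (hζ1 : ζ ≠ 1)
    (h : ℂ → ℂ)
    (hdiff : ∀ z : ℂ, z ≠ 0 → DifferentiableAt ℂ h z)
    (heq : ∀ z : ℂ, z ≠ 0 → ζ * h z = h (q * z)) :
    ∀ z : ℂ, z ≠ 0 → h z = 0 := by
  have hq : q ≠ 0 := norm_pos_iff.mp hq0
  have hdiffOn : DifferentiableOn ℂ h {0}ᶜ := fun z hz => (hdiff z hz).differentiableWithinAt
  have hnorm : ∀ z ≠ 0, ‖h (q * z)‖ = ‖h z‖ := fun z hz => by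
    rw [← heq z hz, norm_mul, hζ, one_mul]
  have hbdd := isBounded_image_compl_zero_of_norm_mul_eq hdiffOn.continuousOn hq hq1 hnorm
  intro z hz
  have hfix : ζ * h z = h z := by
    rw [heq z hz, apply_eq_apply_of_differentiableOn_compl_zero_of_isBounded hdiffOn hbdd
      (mul_ne_zero hq hz) hz]
  by_contra hz0
  exact hζ1 ((mul_eq_right₀ hz0).mp hfix)
end

section
/- Let q ∈ ℂ with 0 < |q| < 1, let p ≥ 1 be a natural number and let e be an integer not divisible by p. If h : ℂ → ℂ is complex differentiable at every point of ℂ ∖ {0} and satisfies h(q^p·z) = q^e·h(z) for all z ≠ 0, then h(z) = 0 for all z ≠ 0. -/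
/-!
Write `Q = q ^ p` and `c = q ^ e`, so that `h (Q z) = c h z`. Multiplying `h` by a power of `z`
makes `‖c‖ ≤ 1`; the functional equation then propagates a bound on the annulus
`‖Q‖ ≤ ‖z‖ ≤ 1` to the whole punctured disc, so the singularity at `0` is removable and `h`
extends to an entire function `F` with `F (Q z) = c F z`. If `F` vanished to finite order `n`
at `0`, comparing leading terms would give `Q ^ n = c`, i.e. `p ∣ e`. Hence `F` vanishes near
`0`, and so everywhere.
-/

open Filter Topology Metric

theorem eventually_eq_zero_of_apply_mul_eq_smul {𝕜 E : Type*} [NontriviallyNormedField 𝕜]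
    [NormedAddCommGroup E] [NormedSpace 𝕜 E] {Q c : 𝕜} {F : 𝕜 → E} (hF : AnalyticAt 𝕜 F 0)
    (hc : ∀ n : ℕ, Q ^ n ≠ c) (heq : ∀ᶠ z in 𝓝[≠] 0, F (Q * z) = c • F z) :
    ∀ᶠ z in 𝓝 0, F z = 0 := by
  by_contra hF0
  obtain ⟨n, hn⟩ := ENat.ne_top_iff_exists.1 (mt analyticOrderAt_eq_top.1 hF0)
  obtain ⟨g, hg, hg0, hFg⟩ := hF.analyticOrderAt_eq_natCast.1 hn.symm
  have hQz : Tendsto (Q * ·) (𝓝 (0 : 𝕜)) (𝓝 0) := by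
    simpa using (continuous_const_mul Q).tendsto 0
  have hgeq : (fun z => Q ^ n • g (Q * z)) =ᶠ[𝓝[≠] 0] fun z => c • g z := by
    filter_upwards [heq, nhdsWithin_le_nhds hFg, nhdsWithin_le_nhds (hQz.eventually hFg),
      self_mem_nhdsWithin] with z hz hFz hFQz hz0
    refine smul_right_injective E (pow_ne_zero n hz0) ?_
    simp only [sub_zero] at hFz hFQz
    rw [hFQz, hFz, mul_pow, mul_smul, smul_comm] at hz
    simpa only [smul_comm c] using hz
  have hg0eq : Q ^ n • g 0 = c • g 0 := by
    have hgQ : ContinuousAt (fun z => Q ^ n • g (Q * z)) 0 :=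
      (hg.continuousAt.comp_of_eq (continuous_const_mul Q).continuousAt (mul_zero Q)).const_smul _
    simpa using ((hgQ.eventuallyEq_nhds_iff_eventuallyEq_nhdsNE
      (hg.continuousAt.const_smul c)).1 hgeq).eq_of_nhds
  exact hc n (smul_left_injective 𝕜 hg0 hg0eq)

section
variable {E : Type*} [NormedAddCommGroup E] [NormedSpace ℂ E]

theorem exists_norm_le_of_apply_mul_eq_smul {Q c : ℂ} {f : ℂ → E} (hQ0 : 0 < ‖Q‖)
    (hQ1 : ‖Q‖ < 1) (hc : ‖c‖ ≤ 1) (hf : ContinuousOn f {0}ᶜ)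
    (heq : ∀ z, z ≠ 0 → f (Q * z) = c • f z) :
    ∃ M, ∀ z, z ≠ 0 → ‖z‖ ≤ 1 → ‖f z‖ ≤ M := by
  have hQ : Q ≠ 0 := norm_pos_iff.1 hQ0
  obtain ⟨M, hM⟩ := ((isCompact_closedBall (0 : ℂ) 1).diff
    (isOpen_ball (x := 0) (ε := ‖Q‖))).exists_bound_of_continuousOn
    (hf.mono fun z hz (hz0 : z = 0) => hz.2 (by simpa [hz0] using hQ0))
  have hannulus : ∀ z : ℂ, ‖Q‖ ≤ ‖z‖ → ‖z‖ ≤ 1 → ‖f z‖ ≤ M := fun z h1 h2 =>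
    hM z ⟨by simpa using h2, by simpa using h1⟩
  -- Each shell `‖Q‖ ^ (n + 1) ≤ ‖z‖ < ‖Q‖ ^ n` is mapped to the previous one by `z ↦ z / Q`.
  have hshell : ∀ n : ℕ, ∀ z : ℂ, ‖Q‖ ^ n ≤ ‖z‖ → ‖z‖ ≤ 1 → ‖f z‖ ≤ M := by
    intro n
    induction n with
    | zero => exact fun z h1 => hannulus z (by simpa using h1.trans' hQ1.le)
    | succ n ih =>
      intro z h1 h2
      rcases le_or_gt ‖Q‖ ‖z‖ with hle | hlt
      · exact hannulus z hle h2
      have hz : z ≠ 0 := norm_pos_iff.1 ((pow_pos hQ0 _).trans_le h1)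
      have hw : ‖Q‖ ^ n ≤ ‖z / Q‖ ∧ ‖z / Q‖ ≤ 1 := by
        rw [norm_div, le_div_iff₀ hQ0, div_le_one hQ0, ← pow_succ]
        exact ⟨h1, hlt.le⟩
      calc ‖f z‖ = ‖c‖ * ‖f (z / Q)‖ := by
            rw [← norm_smul, ← heq _ (div_ne_zero hz hQ), mul_div_cancel₀ z hQ]
        _ ≤ ‖f (z / Q)‖ := mul_le_of_le_one_left (norm_nonneg _) hc
        _ ≤ M := ih _ hw.1 hw.2
  refine ⟨M, fun z hz h1 => ?_⟩
  obtain ⟨n, hn⟩ := exists_pow_lt_of_lt_one (norm_pos_iff.2 hz) hQ1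
  exact hshell n z hn.le h1

theorem exists_differentiable_eq_of_norm_le [CompleteSpace E] {f : ℂ → E} {M : ℝ}
    (hf : ∀ z, z ≠ 0 → DifferentiableAt ℂ f z) (hM : ∀ z, z ≠ 0 → ‖z‖ ≤ 1 → ‖f z‖ ≤ M) :
    ∃ F : ℂ → E, Differentiable ℂ F ∧ ∀ z, z ≠ 0 → F z = f z := by
  set F := Function.update f 0 (limUnder (𝓝[≠] 0) f)
  have hFf : ∀ z, z ≠ 0 → F z = f z := fun z hz => Function.update_of_ne hz _ _
  have hball : DifferentiableOn ℂ F (closedBall 0 1) := by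
    refine Complex.differentiableOn_update_limUnder_of_bddAbove (closedBall_mem_nhds 0 one_pos)
      (fun z hz => (hf z hz.2).differentiableWithinAt) ⟨M, ?_⟩
    rintro _ ⟨z, ⟨hz1, hz0⟩, rfl⟩
    exact hM z hz0 (by simpa using hz1)
  refine ⟨F, ?_, hFf⟩
  rw [← differentiableOn_univ, ← Complex.differentiableOn_compl_singleton_and_continuousAt_iff
    univ_mem]
  refine ⟨fun z hz => ((hf z hz.2).differentiableWithinAt).congr (fun w hw => hFf w hw.2)
    (hFf z hz.2), (hball.differentiableAt (closedBall_mem_nhds 0 one_pos)).continuousAt⟩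

theorem eq_zero_of_apply_mul_eq_smul_of_norm_le_one [CompleteSpace E] {Q c : ℂ} {f : ℂ → E}
    (hQ0 : 0 < ‖Q‖) (hQ1 : ‖Q‖ < 1) (hc1 : ‖c‖ ≤ 1) (hc : ∀ n : ℕ, Q ^ n ≠ c)
    (hf : ∀ z, z ≠ 0 → DifferentiableAt ℂ f z) (heq : ∀ z, z ≠ 0 → f (Q * z) = c • f z) :
    ∀ z, z ≠ 0 → f z = 0 := by
  obtain ⟨M, hM⟩ := exists_norm_le_of_apply_mul_eq_smul hQ0 hQ1 hc1
    (fun z hz => (hf z hz).continuousAt.continuousWithinAt) heq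
  obtain ⟨F, hF, hFf⟩ := exists_differentiable_eq_of_norm_le hf hM
  have hFeq : ∀ᶠ z in 𝓝[≠] 0, F (Q * z) = c • F z := by
    filter_upwards [self_mem_nhdsWithin] with z hz
    rw [hFf _ (mul_ne_zero (norm_pos_iff.1 hQ0) hz), hFf z hz, heq z hz]
  have hF0 : F = 0 := AnalyticOnNhd.eq_of_eventuallyEq (fun z _ => hF.analyticAt z)
    analyticOnNhd_const (eventually_eq_zero_of_apply_mul_eq_smul (hF.analyticAt 0) hc hFeq)
  intro z hz
  rw [← hFf z hz, hF0, Pi.zero_apply]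

theorem eq_zero_of_apply_mul_eq_smul [CompleteSpace E] {Q c : ℂ} {f : ℂ → E}
    (hQ0 : 0 < ‖Q‖) (hQ1 : ‖Q‖ < 1) (hc : ∀ n : ℤ, Q ^ n ≠ c)
    (hf : ∀ z, z ≠ 0 → DifferentiableAt ℂ f z) (heq : ∀ z, z ≠ 0 → f (Q * z) = c • f z) :
    ∀ z, z ≠ 0 → f z = 0 := by
  have hQ : Q ≠ 0 := norm_pos_iff.1 hQ0
  -- Multiplying `f` by `z ^ m` replaces `c` by `Q ^ m * c`, which is small for large `m`.
  obtain ⟨m, hm⟩ : ∃ m : ℕ, ‖Q ^ m * c‖ ≤ 1 := by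
    have := (tendsto_pow_atTop_nhds_zero_of_lt_one hQ0.le hQ1).mul_const ‖c‖
    rw [zero_mul] at this
    obtain ⟨m, hm⟩ := (this.eventually (eventually_le_nhds zero_lt_one)).exists
    exact ⟨m, by simpa using hm⟩
  have hg := eq_zero_of_apply_mul_eq_smul_of_norm_le_one (f := fun z => z ^ m • f z) hQ0 hQ1 hm
    (fun n hn => hc (n - m) (by
      rw [zpow_sub₀ hQ, zpow_natCast, zpow_natCast, hn, mul_div_cancel_left₀ _ (pow_ne_zero m hQ)]))
    (fun z hz => (differentiableAt_pow m).smul (hf z hz))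
    (fun z hz => by simp only [heq z hz, mul_pow, mul_smul, smul_comm c])
  exact fun z hz => (smul_eq_zero.1 (hg z hz)).resolve_left (pow_ne_zero m hz)

end

/-- Let `q : ℂ` with `0 < |q| < 1`, `p ≥ 1` a natural number and
`e` an integer not divisible by `p`. If `h : ℂ → ℂ` is complex differentiable at
every point of `ℂ \ {0}` and satisfies `h (q^p·z) = q^e·h z` for all `z ≠ 0`,
then `h z = 0` for all `z ≠ 0`. -/
theorem orbit_functional_equation_no_solution
    (q : ℂ) (hq0 : 0 < ‖q‖) (hq1 : ‖q‖ < 1)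
    (p : ℕ) (hp : 1 ≤ p) (e : ℤ) (he : ¬ (p : ℤ) ∣ e)
    (h : ℂ → ℂ)
    (hdiff : ∀ z : ℂ, z ≠ 0 → DifferentiableAt ℂ h z)
    (heq : ∀ z : ℂ, z ≠ 0 → h (q ^ p * z) = q ^ e * h z) :
    ∀ z : ℂ, z ≠ 0 → h z = 0 := by
  refine eq_zero_of_apply_mul_eq_smul (by rw [norm_pow]; positivity)
    (by rw [norm_pow]; exact pow_lt_one₀ (norm_nonneg q) hq1 (by omega)) (fun n hn => he ⟨n, ?_⟩)
    hdiff heq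
  have hnorm := congrArg norm hn
  rw [norm_zpow, norm_zpow, norm_pow, ← zpow_natCast, ← zpow_mul] at hnorm
  exact (zpow_right_injective₀ hq0 hq1.ne hnorm).symm
end

section
/- Let n ≥ 2. In ℝ^{n+1} with standard basis e_1, …, e_{n+1}, set α_i = e_i − e_{i+1} for 1 ≤ i ≤ n, θ = e_1 − e_{n+1}, and c = r_θ ∘ r_{α_1} ∘ ⋯ ∘ r_{α_n}. Let V = {x ∈ ℝ^{n+1} : Σ_{i=1}^{n+1} x_i = 0}. Then the fixed-point space {v ∈ V : c(v) = v} is the one-dimensional subspace spanned by e_1 + ⋯ + e_n − n·e_{n+1}. -/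
open Finset

/-- The orthogonal reflection `r_a(x) = x - (2⟨x,a⟩/⟨a,a⟩)·a` in a nonzero
vector `a` of Euclidean space. -/
noncomputable def reflect {m : ℕ} (a : EuclideanSpace ℝ (Fin m))
    (x : EuclideanSpace ℝ (Fin m)) : EuclideanSpace ℝ (Fin m) :=
  x - ((2 * (inner ℝ x a : ℝ) / (inner ℝ a a : ℝ)) • a)

/-- The standard basis vector `e i` of Euclidean space `ℝ^m`. -/
noncomputable def stdVec (m : ℕ) (i : Fin m) : EuclideanSpace ℝ (Fin m) :=
  EuclideanSpace.single i 1

/-- The linear part `c = r_θ ∘ r_{α_1} ∘ ⋯ ∘ r_{α_n}` of the affine Coxeter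
element of type `A_n`, acting on `ℝ^{n+1}`; here `α_i = e_i - e_{i+1}`
(1-based, i.e. `α (i+1) = e i.castSucc - e i.succ` 0-based) and
`θ = e_1 - e_{n+1}` is the highest root. `r_{α_n}` is applied first. -/
noncomputable def coxA (n : ℕ) :
    EuclideanSpace ℝ (Fin (n + 1)) → EuclideanSpace ℝ (Fin (n + 1)) :=
  reflect (stdVec (n + 1) 0 - stdVec (n + 1) (Fin.last n)) ∘
    (List.ofFn fun i : Fin n =>
      reflect (stdVec (n + 1) i.castSucc - stdVec (n + 1) i.succ)).foldr (· ∘ ·) id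


/-! The reflection in `e_a - e_b` swaps the coordinates `a` and `b`, so `c` permutes coordinates:
`(c x)_k = x_{π⁻¹ k}` with `π = (0 n) · (0 1 ⋯ n)`, and the product of the adjacent transpositions
is the long cycle `(0 1 ⋯ n)`. This `π` fixes `n` and rotates `0, …, n - 1` cyclically, so `c x = x`
says exactly that `x` is constant on the first `n` coordinates; the sum condition then forces
`x_n = -n x_0`. -/

open Equiv

theorem reflect_stdVec_sub_apply {m : ℕ} (a b : Fin m) (x : EuclideanSpace ℝ (Fin m))
    (k : Fin m) : reflect (stdVec m a - stdVec m b) x k = x (swap a b k) := by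
  rcases eq_or_ne a b with rfl | hab
  · -- `reflect 0` is the identity, through the junk value `0 / 0 = 0`
    simp [reflect]
  have hnorm : inner ℝ (stdVec m a - stdVec m b) (stdVec m a - stdVec m b) = (2 : ℝ) := by
    simp only [stdVec, inner_sub_left, inner_sub_right, EuclideanSpace.inner_single_left,
      PiLp.single_apply, if_pos, hab, hab.symm]
    norm_num
  have hx : inner ℝ x (stdVec m a - stdVec m b) = x a - x b := by
    simp [stdVec, inner_sub_right, EuclideanSpace.inner_single_right]
  rw [reflect, hnorm, hx, mul_div_cancel_left₀ _ two_ne_zero]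
  simp only [PiLp.sub_apply, PiLp.smul_apply, stdVec, PiLp.single_apply, swap_apply_def]
  split_ifs <;> subst_vars <;> simp_all

theorem foldr_reflect_apply {m : ℕ} (l : List (Fin m × Fin m))
    (x : EuclideanSpace ℝ (Fin m)) (k : Fin m) :
    (l.map fun p => reflect (stdVec m p.1 - stdVec m p.2)).foldr (· ∘ ·) id x k =
      x ((l.map fun p => swap p.1 p.2).prod⁻¹ k) := by
  induction l generalizing k with
  | nil => rfl
  | cons p l ih =>
    simp only [List.map_cons, List.foldr_cons, Function.comp_apply, List.prod_cons, mul_inv_rev,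
      swap_inv, Perm.mul_apply]
    rw [reflect_stdVec_sub_apply, ih]

theorem Fin.coe_cycleRange {N : ℕ} (i k : Fin N) :
    (cycleRange i k : ℕ) = if k < i then (k : ℕ) + 1 else if k = i then 0 else (k : ℕ) := by
  rcases lt_or_ge i k with hik | hki
  · rw [cycleRange_of_gt hik, if_neg (by omega), if_neg hik.ne']
  · rw [coe_cycleRange_of_le hki]
    split_ifs <;> first | rfl | omega

theorem Fin.cycleRange_mul_swap {N : ℕ} {i j : Fin N} (hij : (j : ℕ) = i + 1) :
    cycleRange i * swap i j = cycleRange j := by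
  ext k
  rw [Perm.mul_apply, coe_cycleRange, coe_cycleRange, swap_apply_def]
  simp only [Fin.ext_iff] at *
  split_ifs <;> omega

theorem prod_ofFn_swap_castLE_eq_cycleRange {n m : ℕ} (hm : m ≤ n) :
    (List.ofFn fun i : Fin m =>
      swap (Fin.castLE (by omega) i.castSucc : Fin (n + 1)) (Fin.castLE (by omega) i.succ)).prod =
      Fin.cycleRange (⟨m, by omega⟩ : Fin (n + 1)) := by
  induction m with
  | zero => simp
  | succ m ih =>
    rw [List.ofFn_succ', List.concat_eq_append, List.prod_append, List.prod_singleton]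
    simp only [Fin.castLE_castSucc, Fin.succ_castSucc] at ih ⊢
    rw [ih (by omega)]
    exact Fin.cycleRange_mul_swap rfl

theorem prod_ofFn_swap_castSucc_succ_eq_finRotate (n : ℕ) :
    (List.ofFn fun i : Fin n => swap i.castSucc i.succ).prod = finRotate (n + 1) := by
  rw [← Fin.cycleRange_last]
  exact prod_ofFn_swap_castLE_eq_cycleRange le_rfl

theorem coxA_apply (n : ℕ) (x : EuclideanSpace ℝ (Fin (n + 1))) (k : Fin (n + 1)) :
    coxA n x k = x ((swap 0 (Fin.last n) * finRotate (n + 1))⁻¹ k) := by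
  have hcox : coxA n = (((0, Fin.last n) :: List.ofFn fun i : Fin n => (i.castSucc, i.succ)).map
      fun p => reflect (stdVec (n + 1) p.1 - stdVec (n + 1) p.2)).foldr (· ∘ ·) id := by
    simp only [coxA, List.map_cons, List.map_ofFn, List.foldr_cons]
    rfl
  rw [hcox, foldr_reflect_apply, List.map_cons, List.prod_cons, List.map_ofFn,
    ← prod_ofFn_swap_castSucc_succ_eq_finRotate]
  rfl

theorem coxA_eq_self_iff (n : ℕ) (x : EuclideanSpace ℝ (Fin (n + 1))) :
    coxA n x = x ↔ ∀ k, x ((swap 0 (Fin.last n) * finRotate (n + 1)) k) = x k := by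
  simp only [PiLp.ext_iff, coxA_apply]
  rw [← (swap 0 (Fin.last n) * finRotate (n + 1)).forall_congr_right]
  simp only [Perm.inv_def, symm_apply_apply]
  exact forall_congr' fun _ => eq_comm

theorem swap_zero_last_mul_finRotate_castSucc {n : ℕ} (j : Fin n) :
    (swap 0 (Fin.last n) * finRotate (n + 1)) j.castSucc = (finRotate n j).castSucc := by
  cases n with
  | zero => exact j.elim0
  | succ n =>
    ext
    rw [Perm.mul_apply, swap_apply_def]
    split_ifs <;>
      simp only [Fin.ext_iff, coe_finRotate, Fin.val_castSucc, Fin.val_last, Fin.val_zero] at * <;>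
      split_ifs at * <;> omega

theorem swap_zero_last_mul_finRotate_last (n : ℕ) :
    (swap 0 (Fin.last n) * finRotate (n + 1)) (Fin.last n) = Fin.last n := by
  rw [Perm.mul_apply, finRotate_last, swap_apply_left]

theorem exists_forall_eq_of_apply_finRotate {α : Type*} [Nonempty α] {n : ℕ} {f : Fin n → α}
    (hf : ∀ j, f (finRotate n j) = f j) : ∃ t, ∀ j, f j = t := by
  cases n with
  | zero => exact ⟨Classical.arbitrary α, fun j => j.elim0⟩
  | succ n =>
    refine ⟨f 0, fun j => ?_⟩
    induction j using Fin.induction with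
    | zero => rfl
    | succ j ih => rw [← Fin.coeSucc_eq_succ, ← finRotate_apply, hf, ih]

theorem eq_smul_sum_stdVec_sub_iff (n : ℕ) (x : EuclideanSpace ℝ (Fin (n + 1))) (t : ℝ) :
    x = t • ((∑ i : Fin n, stdVec (n + 1) i.castSucc) - (n : ℝ) • stdVec (n + 1) (Fin.last n)) ↔
      (∀ j : Fin n, x j.castSucc = t) ∧ x (Fin.last n) = -(n * t) := by
  simp only [PiLp.ext_iff, Fin.forall_fin_succ', PiLp.smul_apply, PiLp.sub_apply, WithLp.ofLp_sum,
    Finset.sum_apply, stdVec, PiLp.single_apply]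
  simp [Fin.castSucc_ne_last, (Fin.castSucc_ne_last _).symm, mul_comm]

theorem coxeterA_fixed_space_general (n : ℕ) :
    ∀ x : EuclideanSpace ℝ (Fin (n + 1)),
      ((∑ i : Fin (n + 1), x i) = 0 ∧ coxA n x = x) ↔
        ∃ t : ℝ, x = t • ((∑ i : Fin n, stdVec (n + 1) i.castSucc) -
          (n : ℝ) • stdVec (n + 1) (Fin.last n)) := by
  intro x
  simp only [eq_smul_sum_stdVec_sub_iff, coxA_eq_self_iff, Fin.forall_fin_succ',
    swap_zero_last_mul_finRotate_castSucc, swap_zero_last_mul_finRotate_last, Fin.sum_univ_castSucc]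
  constructor
  · rintro ⟨hsum, hrot, -⟩
    obtain ⟨t, ht⟩ := exists_forall_eq_of_apply_finRotate (f := fun j => x j.castSucc) hrot
    simp only [ht, Finset.sum_const, Finset.card_univ, Fintype.card_fin, nsmul_eq_mul] at hsum
    exact ⟨t, ht, by linarith⟩
  · rintro ⟨t, ht, hlast⟩
    simp [ht, hlast]

/-- For `n ≥ 2`, the fixed-point space of the Coxeter element
`c = r_θ ∘ r_{α_1} ∘ ⋯ ∘ r_{α_n}` of type `A_n` inside the hyperplane
`V = {x : Σ x_i = 0}` of `ℝ^{n+1}` is the line spanned by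
`e_1 + ⋯ + e_n - n·e_{n+1}` (0-based: `(Σ_{i<n} e_i) - n·e_n`). -/
theorem coxeterA_fixed_space (n : ℕ) (hn : 2 ≤ n) :
    ∀ x : EuclideanSpace ℝ (Fin (n + 1)),
      ((∑ i : Fin (n + 1), x i) = 0 ∧ coxA n x = x) ↔
        ∃ t : ℝ, x = t • ((∑ i : Fin n, stdVec (n + 1) i.castSucc) -
          (n : ℝ) • stdVec (n + 1) (Fin.last n)) :=
  coxeterA_fixed_space_general n
end

section
/- Let n ≥ 2. In ℝ^{n+1} with standard basis e_1, …, e_{n+1}, set α_i = e_i − e_{i+1} for 1 ≤ i ≤ n, θ = e_1 − e_{n+1}, and c = r_θ ∘ r_{α_1} ∘ ⋯ ∘ r_{α_n}. Then: (i) the orbit of α_1 under iteration of c equals the set {e_i − e_{i+1} : 1 ≤ i ≤ n−1} ∪ {e_n − e_1}, i.e. {α_1, …, α_{n−1}, −(α_1 + ⋯ + α_{n−1})}; (ii) the orbit of α_n under iteration of c equals the set {e_i − e_{n+1} : 1 ≤ i ≤ n}, i.e. {α_i + α_{i+1} + ⋯ + α_n : 1 ≤ i ≤ n}. -/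
open Finset

/-!
Each reflection `r_{e_p - e_q}` permutes the standard basis by the transposition `(p q)`, so `c`
maps `e_i - e_j` to `e_{σ i} - e_{σ j}` with `σ = (0 n) (0 1) (1 2) ⋯ (n-1 n)`. The product of the
adjacent transpositions is the cycle `(0 1 ⋯ n)`; rotating it to `(n 0 1 ⋯ n-1)` shows that the
factor `(0 n)` coming from `r_θ` cuts it down to the `n`-cycle `(0 1 ⋯ n-1)`, which fixes `n`.
Hence `c^k (e_i - e_j) = e_{i+k mod n} - e_{j+k mod n}` for `i, j < n`, and
`c^k (e_i - e_n) = e_{i+k mod n} - e_n`, from which both orbits are read off.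
-/

open Equiv

lemma reflect_sub {m : ℕ} (a x y : EuclideanSpace ℝ (Fin m)) :
    reflect a (x - y) = reflect a x - reflect a y := by
  simp only [reflect, inner_sub_left, mul_sub, sub_div, sub_smul]
  abel

lemma inner_stdVec {m : ℕ} (i j : Fin m) :
    inner ℝ (stdVec m i) (stdVec m j) = if i = j then 1 else 0 := by
  simp [stdVec, EuclideanSpace.inner_single_left]

lemma reflect_stdVec_sub_stdVec {m : ℕ} {p q : Fin m} (hpq : p ≠ q) (i : Fin m) :
    reflect (stdVec m p - stdVec m q) (stdVec m i) = stdVec m (swap p q i) := by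
  simp only [reflect, inner_sub_left, inner_sub_right, inner_stdVec, if_neg hpq, if_neg hpq.symm]
  rcases eq_or_ne i p with rfl | hip
  · norm_num [hpq]
  rcases eq_or_ne i q with rfl | hiq
  · norm_num [hpq.symm]
  · simp [hip, hiq, swap_apply_of_ne_of_ne hip hiq]

lemma foldr_reflect_zipWith_tail {m : ℕ} :
    ∀ (l : List (Fin m)), l.Nodup → ∀ i j : Fin m,
      (List.zipWith (fun p q => reflect (stdVec m p - stdVec m q)) l l.tail).foldr (· ∘ ·) id
          (stdVec m i - stdVec m j) =
        stdVec m (l.formPerm i) - stdVec m (l.formPerm j)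
  | [], _, _, _ => rfl
  | [_], _, _, _ => rfl
  | p :: q :: l, hl, i, j => by
    have hpq : p ≠ q := by simp_all
    have ih := foldr_reflect_zipWith_tail (q :: l) hl.of_cons i j
    rw [List.tail_cons] at ih
    rw [List.tail_cons, List.zipWith_cons_cons, List.foldr_cons, Function.comp_apply, ih,
      reflect_sub, reflect_stdVec_sub_stdVec hpq, reflect_stdVec_sub_stdVec hpq]
    rfl

lemma List.formPerm_cons_append_singleton {α : Type*} [DecidableEq α] (x y : α) (l : List α)
    (h : (x :: l ++ [y]).Nodup) :
    (x :: l ++ [y]).formPerm = Equiv.swap y x * (x :: l).formPerm := by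
  rw [← List.formPerm_rotate _ h (x :: l).length, List.rotate_append_length_eq]
  rfl

def coxPerm (n : ℕ) : Perm (Fin (n + 1)) :=
  ((List.finRange n).map Fin.castSucc).formPerm

lemma swap_zero_last_mul_formPerm_finRange {n : ℕ} (hn : 0 < n) :
    swap 0 (Fin.last n) * (List.finRange (n + 1)).formPerm = coxPerm n := by
  obtain ⟨m, rfl⟩ := Nat.exists_eq_add_one_of_ne_zero hn.ne'
  have hL : (List.finRange (m + 1)).map Fin.castSucc =
      0 :: (List.finRange m).map (Fin.castSucc ∘ Fin.succ) := by
    simp [List.finRange_succ]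
  have hnodup := List.nodup_finRange (m + 2)
  rw [List.finRange_succ_last, hL] at hnodup
  rw [List.finRange_succ_last, coxPerm, hL,
    List.formPerm_cons_append_singleton _ _ _ hnodup, ← mul_assoc, swap_comm, swap_mul_self,
    one_mul]

lemma ofFn_reflect_eq_zipWith_finRange (n : ℕ) :
    List.ofFn (fun i : Fin n => reflect (stdVec (n + 1) i.castSucc - stdVec (n + 1) i.succ)) =
      List.zipWith (fun p q => reflect (stdVec (n + 1) p - stdVec (n + 1) q))
        (List.finRange (n + 1)) (List.finRange (n + 1)).tail := by
  refine List.ext_getElem (by simp) fun _ _ _ => ?_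
  simp [Fin.castSucc, Fin.succ]

lemma coxA_stdVec_sub {n : ℕ} (hn : 0 < n) (i j : Fin (n + 1)) :
    coxA n (stdVec (n + 1) i - stdVec (n + 1) j) =
      stdVec (n + 1) (coxPerm n i) - stdVec (n + 1) (coxPerm n j) := by
  have h0 : (0 : Fin (n + 1)) ≠ Fin.last n := by
    rw [Ne, Fin.ext_iff, Fin.val_zero, Fin.val_last]; omega
  rw [coxA, Function.comp_apply, ofFn_reflect_eq_zipWith_finRange,
    foldr_reflect_zipWith_tail _ (List.nodup_finRange _), reflect_sub,
    reflect_stdVec_sub_stdVec h0, reflect_stdVec_sub_stdVec h0,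
    ← swap_zero_last_mul_formPerm_finRange hn]
  rfl

lemma coxA_iterate_stdVec_sub {n : ℕ} (hn : 0 < n) (k : ℕ) (i j : Fin (n + 1)) :
    (coxA n)^[k] (stdVec (n + 1) i - stdVec (n + 1) j) =
      stdVec (n + 1) ((coxPerm n ^ k) i) - stdVec (n + 1) ((coxPerm n ^ k) j) := by
  induction k generalizing i j with
  | zero => rfl
  | succ k ih => rw [Function.iterate_succ_apply, coxA_stdVec_sub hn, ih, pow_succ]; rfl

lemma coxPerm_pow_apply_of_lt {n : ℕ} (k i : ℕ) (hi : i < n) :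
    (coxPerm n ^ k) ⟨i, Nat.lt_succ_of_lt hi⟩ =
      ⟨(i + k) % n, Nat.lt_succ_of_lt (Nat.mod_lt _ (Nat.zero_lt_of_lt hi))⟩ := by
  have := List.formPerm_pow_apply_getElem ((List.finRange n).map Fin.castSucc)
    ((List.nodup_finRange n).map (Fin.castSucc_injective n)) k i (by simpa using hi)
  simpa [coxPerm] using this

lemma coxPerm_pow_apply_last (n k : ℕ) : (coxPerm n ^ k) (Fin.last n) = Fin.last n :=
  Perm.pow_apply_eq_self_of_apply_eq_self
    (List.formPerm_apply_of_notMem (by simp [Fin.castSucc_ne_last])) k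

lemma coxA_iterate_alpha_first {n : ℕ} (hn : 2 ≤ n) (k : ℕ) :
    (coxA n)^[k] (stdVec (n + 1) ⟨0, n.succ_pos⟩ -
        stdVec (n + 1) ⟨1, Nat.lt_succ_of_le (by omega : 1 ≤ n)⟩) =
      stdVec (n + 1) ⟨k % n, Nat.lt_succ_of_lt (Nat.mod_lt _ (by omega))⟩ -
        stdVec (n + 1) ⟨(k + 1) % n, Nat.lt_succ_of_lt (Nat.mod_lt _ (by omega))⟩ := by
  rw [coxA_iterate_stdVec_sub (by omega), coxPerm_pow_apply_of_lt k 0 (by omega),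
    coxPerm_pow_apply_of_lt k 1 (by omega)]
  simp only [zero_add, add_comm 1 k]

lemma coxA_iterate_alpha_last {n : ℕ} (hn : 2 ≤ n) (k : ℕ) :
    (coxA n)^[k] (stdVec (n + 1) ⟨n - 1, Nat.lt_succ_of_le (n.sub_le 1)⟩ -
        stdVec (n + 1) ⟨n, n.lt_succ_self⟩) =
      stdVec (n + 1) ⟨(n - 1 + k) % n, Nat.lt_succ_of_lt (Nat.mod_lt _ (by omega))⟩ -
        stdVec (n + 1) ⟨n, n.lt_succ_self⟩ := by
  rw [coxA_iterate_stdVec_sub (by omega), coxPerm_pow_apply_of_lt k (n - 1) (by omega)]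
  exact congrArg _ (congrArg _ (coxPerm_pow_apply_last n k))

/-- For `n ≥ 2` and the Coxeter element
`c = r_θ ∘ r_{α_1} ∘ ⋯ ∘ r_{α_n}` of type `A_n` on `ℝ^{n+1}` (0-based indexing):
(i) the orbit of `α_1 = e_0 - e_1` under iteration of `c` is
`{e_j - e_{j+1} : 0 ≤ j ≤ n-2} ∪ {e_{n-1} - e_0}`;
(ii) the orbit of `α_n = e_{n-1} - e_n` under iteration of `c` is
`{e_j - e_n : 0 ≤ j ≤ n-1}`. -/
theorem coxeterA_orbits_of_simple_roots (n : ℕ) (hn : 2 ≤ n) :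
    ({v | ∃ k : ℕ, (coxA n)^[k]
        (stdVec (n + 1) ⟨0, by omega⟩ - stdVec (n + 1) ⟨1, by omega⟩) = v} =
      {v | ∃ j : ℕ, ∃ _ : j + 2 ≤ n,
          v = stdVec (n + 1) ⟨j, by omega⟩ - stdVec (n + 1) ⟨j + 1, by omega⟩} ∪
        {stdVec (n + 1) ⟨n - 1, by omega⟩ - stdVec (n + 1) ⟨0, by omega⟩}) ∧
    ({v | ∃ k : ℕ, (coxA n)^[k]
        (stdVec (n + 1) ⟨n - 1, by omega⟩ - stdVec (n + 1) ⟨n, by omega⟩) = v} =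
      {v | ∃ j : ℕ, ∃ _ : j + 1 ≤ n,
          v = stdVec (n + 1) ⟨j, by omega⟩ - stdVec (n + 1) ⟨n, by omega⟩}) := by
  have hn0 : 0 < n := by omega
  simp only [coxA_iterate_alpha_first hn, coxA_iterate_alpha_last hn]
  refine ⟨Set.ext fun v => ⟨?_, ?_⟩, Set.ext fun v => ⟨?_, ?_⟩⟩
  · rintro ⟨k, rfl⟩
    have hk := Nat.mod_lt k hn0
    have hsucc : (k + 1) % n = (k % n + 1) % n := (Nat.mod_add_mod k n 1).symm
    by_cases hwrap : k % n + 1 = n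
    · have hzero : (k + 1) % n = 0 := by rw [hsucc, hwrap, Nat.mod_self]
      right
      simp only [hzero, show k % n = n - 1 by omega, Set.mem_singleton_iff]
    · left
      exact ⟨k % n, by omega, by simp only [hsucc, Nat.mod_eq_of_lt (by omega : k % n + 1 < n)]⟩
  · rintro (⟨j, hj, rfl⟩ | rfl)
    · exact ⟨j, by
        simp only [Nat.mod_eq_of_lt (by omega : j < n), Nat.mod_eq_of_lt (by omega : j + 1 < n)]⟩
    · exact ⟨n - 1, by
        simp only [Nat.mod_eq_of_lt (by omega : n - 1 < n), Nat.sub_add_cancel (by omega : 1 ≤ n),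
          Nat.mod_self]⟩
  · rintro ⟨k, rfl⟩
    exact ⟨_, Nat.mod_lt _ hn0, rfl⟩
  · rintro ⟨j, hj, rfl⟩
    refine ⟨j + 1, ?_⟩
    simp only [show n - 1 + (j + 1) = n + j by omega, Nat.add_mod_left,
      Nat.mod_eq_of_lt (by omega : j < n)]
end

section
/- Let q ∈ ℂ with 0 < |q| < 1 and let λ ∈ ℂ. Suppose h : ℂ → ℂ is complex differentiable at every point of ℂ ∖ {0} and satisfies h(q·z) = λ·h(z) for all z ≠ 0. Then: (i) if λ ≠ q^m for every integer m, then h(z) = 0 for all z ≠ 0; (ii) if λ = q^m for some integer m, then there exists a ∈ ℂ such that h(z) = a·z^m for all z ≠ 0. -/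
/-!
Multiplying `h` by `z ^ j` replaces `λ` by `q ^ j * λ`, so we may assume `‖λ‖ ≤ 1`, and `λ = 1` in
case (ii). Every `z` with `0 < ‖z‖ ≤ 1` is `q ^ n * w` with `n ≥ 0` and `w` in the compact annulus
`‖q‖ ≤ ‖w‖ ≤ 1`, so `h z = λ ^ n * h w` stays bounded near `0` and the singularity is removable.
The resulting entire function `G` still satisfies `G (q * z) = λ * G z`, so its Taylor coefficients
satisfy `(q ^ k - λ) * G⁽ᵏ⁾(0) = 0`: `G` is constant as soon as `λ ≠ q ^ k` for all `k ≥ 1`, and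
the constant vanishes unless `λ = 1`.
-/

open Set Filter Metric Topology

section

variable {q μ : ℂ} {G g : ℂ → ℂ}

theorem comp_pow_mul_eq (hq : q ≠ 0) (heq : ∀ z ≠ 0, g (q * z) = μ * g z) (n : ℕ) {z : ℂ}
    (hz : z ≠ 0) : g (q ^ n * z) = μ ^ n * g z := by
  induction n with
  | zero => simp
  | succ n ih =>
    rw [pow_succ', mul_assoc, heq _ (mul_ne_zero (pow_ne_zero n hq) hz), ih, pow_succ', mul_assoc]

theorem exists_pow_mul_of_norm_le_one (hq0 : 0 < ‖q‖) (hq1 : ‖q‖ < 1) {z : ℂ} (hz : z ≠ 0)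
    (hz1 : ‖z‖ ≤ 1) : ∃ n : ℕ, ∃ w : ℂ, ‖q‖ ≤ ‖w‖ ∧ ‖w‖ ≤ 1 ∧ z = q ^ n * w := by
  obtain ⟨n, hlow, hup⟩ := exists_nat_pow_near_of_lt_one (norm_pos_iff.mpr hz) hz1 hq0 hq1
  have hqn : 0 < ‖q‖ ^ n := pow_pos hq0 n
  refine ⟨n, z / q ^ n, ?_, ?_, ?_⟩
  · rw [norm_div, norm_pow, le_div_iff₀ hqn, ← pow_succ']
    exact hlow.le
  · rw [norm_div, norm_pow, div_le_one hqn]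
    exact hup
  · rw [mul_div_cancel₀ _ (pow_ne_zero n (norm_pos_iff.mp hq0))]

theorem exists_bound_of_comp_const_mul_eq (hq0 : 0 < ‖q‖) (hq1 : ‖q‖ < 1) (hμ : ‖μ‖ ≤ 1)
    (hg : ContinuousOn g {0}ᶜ) (heq : ∀ z ≠ 0, g (q * z) = μ * g z) :
    ∃ C, ∀ z ≠ 0, ‖z‖ ≤ 1 → ‖g z‖ ≤ C := by
  have hA : IsCompact {w : ℂ | ‖q‖ ≤ ‖w‖ ∧ ‖w‖ ≤ 1} :=
    (isCompact_closedBall 0 1).of_isClosed_subset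
      ((isClosed_le continuous_const continuous_norm).inter
        (isClosed_le continuous_norm continuous_const))
      fun w hw => mem_closedBall_zero_iff.mpr hw.2
  obtain ⟨C, hC⟩ := hA.exists_bound_of_continuousOn
    (hg.mono fun w hw => norm_pos_iff.mp (hq0.trans_le hw.1))
  refine ⟨C, fun z hz hz1 => ?_⟩
  obtain ⟨n, w, hqw, hw1, rfl⟩ := exists_pow_mul_of_norm_le_one hq0 hq1 hz hz1
  have hw : w ≠ 0 := norm_pos_iff.mp (hq0.trans_le hqw)
  calc ‖g (q ^ n * w)‖ = ‖μ‖ ^ n * ‖g w‖ := by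
        rw [comp_pow_mul_eq (norm_pos_iff.mp hq0) heq n hw, norm_mul, norm_pow]
    _ ≤ 1 * C :=
        mul_le_mul (pow_le_one₀ (norm_nonneg μ) hμ) (hC w ⟨hqw, hw1⟩) (norm_nonneg _) zero_le_one
    _ = C := one_mul C

theorem exists_differentiable_eqOn_compl_zero (hg : ∀ z ≠ 0, DifferentiableAt ℂ g z)
    {C : ℝ} (hC : ∀ z ≠ 0, ‖z‖ ≤ 1 → ‖g z‖ ≤ C) :
    ∃ G : ℂ → ℂ, Differentiable ℂ G ∧ EqOn G g {0}ᶜ := by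
  set G := Function.update g 0 (limUnder (𝓝[≠] 0) g)
  have hGg : EqOn G g {0}ᶜ := fun z hz => Function.update_of_ne hz _ _
  have hball : DifferentiableOn ℂ G (closedBall 0 1) :=
    Complex.differentiableOn_update_limUnder_of_bddAbove (closedBall_mem_nhds 0 one_pos)
      (fun z hz => (hg z hz.2).differentiableWithinAt)
      ⟨C, by rintro _ ⟨z, hz, rfl⟩; exact hC z hz.2 (mem_closedBall_zero_iff.mp hz.1)⟩
  refine ⟨G, fun z => ?_, hGg⟩
  rcases eq_or_ne z 0 with rfl | hz
  · exact hball.differentiableAt (closedBall_mem_nhds 0 one_pos)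
  · exact (hg z hz).congr_of_eventuallyEq (eventuallyEq_of_mem (isOpen_ne.mem_nhds hz) hGg)

theorem iteratedDeriv_zero_eq_zero_of_comp_const_mul_eq (hG : Differentiable ℂ G)
    (heq : ∀ z, G (q * z) = μ * G z) {k : ℕ} (hk : μ ≠ q ^ k) : iteratedDeriv k G 0 = 0 := by
  have h := congrFun (congrArg (iteratedDeriv k) (funext heq)) 0
  rw [iteratedDeriv_comp_const_mul hG.contDiff, iteratedDeriv_const_mul_field] at h
  simp only [mul_zero] at h
  exact (mul_eq_mul_right_iff.mp h).resolve_left hk.symm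

theorem apply_eq_apply_zero_of_comp_const_mul_eq (hG : Differentiable ℂ G)
    (heq : ∀ z, G (q * z) = μ * G z) (hμ : ∀ k : ℕ, 0 < k → μ ≠ q ^ k) (z : ℂ) : G z = G 0 := by
  rw [← Complex.taylorSeries_eq_of_entire' 0 z hG, tsum_eq_single 0]
  · simp
  · intro k hk
    rw [iteratedDeriv_zero_eq_zero_of_comp_const_mul_eq hG heq (hμ k (pos_of_ne_zero hk))]
    simp

theorem exists_eq_const_of_comp_const_mul_eq (hq0 : 0 < ‖q‖) (hq1 : ‖q‖ < 1) (hμ : ‖μ‖ ≤ 1)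
    (hμq : ∀ k : ℕ, 0 < k → μ ≠ q ^ k) (hg : ∀ z ≠ 0, DifferentiableAt ℂ g z)
    (heq : ∀ z ≠ 0, g (q * z) = μ * g z) : ∃ a, μ * a = a ∧ ∀ z ≠ 0, g z = a := by
  obtain ⟨C, hC⟩ := exists_bound_of_comp_const_mul_eq hq0 hq1 hμ
    (fun z hz => (hg z hz).continuousAt.continuousWithinAt) heq
  obtain ⟨G, hG, hGg⟩ := exists_differentiable_eqOn_compl_zero hg hC
  have hGeq : ∀ z, G (q * z) = μ * G z := congrFun <|
    (hG.continuous.comp (continuous_const_mul q)).ext_on (dense_compl_singleton 0)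
      (continuous_const.mul hG.continuous) fun z (hz : z ≠ 0) => by
        simp only [Function.comp, hGg hz, hGg (mul_ne_zero (norm_pos_iff.mp hq0) hz), heq z hz]
  refine ⟨G 0, by simpa using (hGeq 0).symm, fun z hz => ?_⟩
  rw [← hGg hz, apply_eq_apply_zero_of_comp_const_mul_eq hG hGeq hμq]

theorem zpow_mul_comp_const_mul_eq {h : ℂ → ℂ} {lam : ℂ} (heq : ∀ z ≠ 0, h (q * z) = lam * h z)
    (j : ℤ) : ∀ z ≠ 0, (q * z) ^ j * h (q * z) = q ^ j * lam * (z ^ j * h z) := by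
  intro z hz
  rw [heq z hz, mul_zpow]
  ring

end

/-- Let `q : ℂ` with `0 < |q| < 1` and `λ ∈ ℂ`. If `h : ℂ → ℂ`
is complex differentiable at every point of `ℂ \ {0}` and satisfies
`h (q·z) = λ·h z` for all `z ≠ 0`, then: (i) if `λ ≠ q^m` for every integer `m`,
then `h` vanishes on `ℂ \ {0}`; (ii) if `λ = q^m` for some integer `m`, then
`h z = a·z^m` on `ℂ \ {0}` for some constant `a`. -/
theorem q_difference_equation_dichotomy
    (q : ℂ) (hq0 : 0 < ‖q‖) (hq1 : ‖q‖ < 1) (lam : ℂ)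
    (h : ℂ → ℂ)
    (hdiff : ∀ z : ℂ, z ≠ 0 → DifferentiableAt ℂ h z)
    (heq : ∀ z : ℂ, z ≠ 0 → h (q * z) = lam * h z) :
    ((∀ m : ℤ, lam ≠ q ^ m) → ∀ z : ℂ, z ≠ 0 → h z = 0) ∧
    (∀ m : ℤ, lam = q ^ m → ∃ a : ℂ, ∀ z : ℂ, z ≠ 0 → h z = a * z ^ m) := by
  have hq : q ≠ 0 := norm_pos_iff.mp hq0
  have normalized (j : ℤ) (hμ : ‖q ^ j * lam‖ ≤ 1) (hμq : ∀ k : ℕ, 0 < k → q ^ j * lam ≠ q ^ k) :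
      ∃ a, q ^ j * lam * a = a ∧ ∀ z ≠ 0, z ^ j * h z = a :=
    exists_eq_const_of_comp_const_mul_eq hq0 hq1 hμ hμq
      (fun z hz => (differentiableAt_zpow.mpr (Or.inl hz)).mul (hdiff z hz))
      (zpow_mul_comp_const_mul_eq heq j)
  refine ⟨fun hlam z hz => ?_, fun m hm => ?_⟩
  · have hμ (n k : ℕ) : q ^ (n : ℤ) * lam ≠ q ^ k := fun hnk => hlam (k - n) <| by
      rw [zpow_natCast] at hnk
      rw [zpow_sub₀ hq, zpow_natCast, zpow_natCast, ← hnk]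
      field_simp
    obtain ⟨n, hn⟩ : ∃ n : ℕ, ‖q ^ (n : ℤ) * lam‖ ≤ 1 := by
      have := ((tendsto_pow_atTop_nhds_zero_of_norm_lt_one hq1).mul_const lam).norm
      simpa using (this.eventually (ge_mem_nhds (by simp))).exists
    obtain ⟨a, ha, hg⟩ := normalized n hn fun k _ => hμ n k
    have ha0 : a = 0 := (mul_left_eq_self₀.mp ha).resolve_left (by simpa using hμ n 0)
    simpa [ha0, hz] using hg z hz
  · have hμ : q ^ (-m) * lam = 1 := by rw [hm, ← zpow_add₀ hq, neg_add_cancel, zpow_zero]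
    obtain ⟨a, -, hg⟩ := normalized (-m) (by rw [hμ, norm_one]) fun k hk hqk =>
      (pow_lt_one₀ (norm_nonneg q) hq1 hk.ne').ne (by rw [← norm_pow, ← hqk, hμ, norm_one])
    refine ⟨a, fun z hz => ?_⟩
    rw [← hg z hz, zpow_neg]
    field_simp
end
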